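/- Let φ_N(s,v) = N(s) × N*(s) + v·N(s) be the ruled surface associated to the dual principal normal indicatrix, where T* = β_T × T, N* = β_N × N and B* = β_B × B, and set ‖Y₂_N‖² = κ²⟨β_T,N⟩² + (2κτ* − 2κ²v)⟨β_T,N⟩ + κ*² − (2τκ* + 2τ²v)⟨β_B,N⟩ + 2κ*τv + τ²⟨β_B,N⟩² + τ*² − 2κτ*v + v²(κ² + τ²) (all functions evaluated at s). Then at every regular point (s,v) the Gaussian curvature of φ_N is K_N(s,v) = −(κκ* + ττ*)² / ‖Y₂_N‖⁴. -/

import Mathlib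

open Matrix

noncomputable section

/-- Cross product on ℝ³ (as `Fin 3 → ℝ`). -/
def cross3 (a b : Fin 3 → ℝ) : Fin 3 → ℝ := crossProduct a b

/-- Euclidean norm on ℝ³ (as `Fin 3 → ℝ`). -/
noncomputable def enorm3 (a : Fin 3 → ℝ) : ℝ := Real.sqrt (a ⬝ᵥ a)

section Aux


lemma cross3_def (a b : Fin 3 → ℝ) : cross3 a b = a ⨯₃ b := rfl

lemma cross3_add_left (a b c : Fin 3 → ℝ) :
    cross3 (a + b) c = cross3 a c + cross3 b c := by
  simp [cross3_def, cross_apply]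

lemma cross3_add_right (a b c : Fin 3 → ℝ) :
    cross3 a (b + c) = cross3 a b + cross3 a c := by
  simp [cross3_def, cross_apply]
  refine ⟨?_, ?_, ?_⟩ <;> ring

lemma cross3_smul_left (r : ℝ) (a b : Fin 3 → ℝ) :
    cross3 (r • a) b = r • cross3 a b := by
  simp [cross3_def, cross_apply]

lemma cross3_smul_right (r : ℝ) (a b : Fin 3 → ℝ) :
    cross3 a (r • b) = r • cross3 a b := by
  simp [cross3_def, cross_apply]

/-- bac-cab rule -/
lemma cross3_cross3 (a b c : Fin 3 → ℝ) :
    cross3 a (cross3 b c) = (a ⬝ᵥ c) • b - (a ⬝ᵥ b) • c := by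
  funext i
  fin_cases i <;>
    simp [cross3_def, cross_apply, dotProduct, Fin.sum_univ_three] <;> ring

/-- cyclic rotation of a triple product, stated for `⬝ᵥ` on the left -/
lemma cross3_dot (a b c : Fin 3 → ℝ) :
    cross3 a b ⬝ᵥ c = b ⬝ᵥ cross3 c a := by
  rw [dotProduct_comm, cross3_def, cross3_def, triple_product_permutation]
  exact triple_product_permutation a b c

lemma dot_cross3_self (a b : Fin 3 → ℝ) : cross3 a b ⬝ᵥ a = 0 := by
  rw [dotProduct_comm, cross3_def, dot_self_cross]

lemma dot_cross3_self' (a b : Fin 3 → ℝ) : cross3 a b ⬝ᵥ b = 0 := by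
  rw [dotProduct_comm, cross3_def, dot_cross_self]

/-- Gram determinant identity, hypothesis-free. -/
lemma gram_identity (t n u : Fin 3 → ℝ) :
    (u ⬝ᵥ cross3 t n) ^ 2 =
      (u ⬝ᵥ u) * ((t ⬝ᵥ t) * (n ⬝ᵥ n) - (t ⬝ᵥ n) ^ 2)
      - (u ⬝ᵥ t) * ((u ⬝ᵥ t) * (n ⬝ᵥ n) - (u ⬝ᵥ n) * (t ⬝ᵥ n))
      + (u ⬝ᵥ n) * ((u ⬝ᵥ t) * (t ⬝ᵥ n) - (u ⬝ᵥ n) * (t ⬝ᵥ t)) := by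
  simp [cross3_def, cross_apply, dotProduct, Fin.sum_univ_three]
  ring

/-- norm² decomposition in an orthonormal frame -/
lemma gram (t n u : Fin 3 → ℝ) (ht : t ⬝ᵥ t = 1) (hn : n ⬝ᵥ n = 1) (htn : t ⬝ᵥ n = 0) :
    u ⬝ᵥ u = (u ⬝ᵥ t) ^ 2 + (u ⬝ᵥ n) ^ 2 + (u ⬝ᵥ cross3 t n) ^ 2 := by
  have h := gram_identity t n u
  rw [ht, hn, htn] at h
  linarith [h]

lemma hasDerivAt_dot {f g : ℝ → Fin 3 → ℝ} {f' g' : Fin 3 → ℝ} {s : ℝ}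
    (hf : HasDerivAt f f' s) (hg : HasDerivAt g g' s) :
    HasDerivAt (fun t => f t ⬝ᵥ g t) (f' ⬝ᵥ g s + f s ⬝ᵥ g') s := by
  have hf0 := hasDerivAt_pi.1 hf 0
  have hf1 := hasDerivAt_pi.1 hf 1
  have hf2 := hasDerivAt_pi.1 hf 2
  have hg0 := hasDerivAt_pi.1 hg 0
  have hg1 := hasDerivAt_pi.1 hg 1
  have hg2 := hasDerivAt_pi.1 hg 2
  have h := ((hf0.mul hg0).add (hf1.mul hg1)).add (hf2.mul hg2)
  simp only [dotProduct, Fin.sum_univ_three]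
  refine h.congr_deriv ?_
  ring

lemma hasDerivAt_cross3 {f g : ℝ → Fin 3 → ℝ} {f' g' : Fin 3 → ℝ} {s : ℝ}
    (hf : HasDerivAt f f' s) (hg : HasDerivAt g g' s) :
    HasDerivAt (fun t => cross3 (f t) (g t)) (cross3 f' (g s) + cross3 (f s) g') s := by
  rw [hasDerivAt_pi]
  intro i
  have hf0 := hasDerivAt_pi.1 hf 0
  have hf1 := hasDerivAt_pi.1 hf 1
  have hf2 := hasDerivAt_pi.1 hf 2
  have hg0 := hasDerivAt_pi.1 hg 0
  have hg1 := hasDerivAt_pi.1 hg 1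
  have hg2 := hasDerivAt_pi.1 hg 2
  fin_cases i
  · simp [cross3_def, cross_apply]
    convert ((hf1.mul hg2).sub (hf2.mul hg1)) using 1
    · funext t; simp only [Pi.sub_apply, Pi.mul_apply]
    · ring
  · simp [cross3_def, cross_apply]
    convert ((hf2.mul hg0).sub (hf0.mul hg2)) using 1
    · funext t; simp only [Pi.sub_apply, Pi.mul_apply]
    · ring
  · simp [cross3_def, cross_apply]
    convert ((hf0.mul hg1).sub (hf1.mul hg0)) using 1
    · funext t; simp only [Pi.sub_apply, Pi.mul_apply]
    · ring

lemma dot_self_nonneg3 (a : Fin 3 → ℝ) : 0 ≤ a ⬝ᵥ a :=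
  Finset.sum_nonneg fun i _ => mul_self_nonneg (a i)


lemma cross3_dot' (a b c : Fin 3 → ℝ) :
    cross3 a b ⬝ᵥ c = a ⬝ᵥ cross3 b c := by
  rw [dotProduct_comm, cross3_def, cross3_def]
  exact triple_product_permutation c a b

end Aux

/-- A dual Frenet apparatus: smooth maps `T, N, B, T*, N*, B* : ℝ → ℝ³` and smooth
functions `κ, τ, κ*, τ* : ℝ → ℝ` such that `{T, N, B}` is orthonormal with `B = T × N`,
the real Frenet equations hold, and the dual-part Frenet equations hold. -/
structure DualFrenetApparatus where
  T : ℝ → Fin 3 → ℝ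
  N : ℝ → Fin 3 → ℝ
  B : ℝ → Fin 3 → ℝ
  Tstar : ℝ → Fin 3 → ℝ
  Nstar : ℝ → Fin 3 → ℝ
  Bstar : ℝ → Fin 3 → ℝ
  kappa : ℝ → ℝ
  tau : ℝ → ℝ
  kappaStar : ℝ → ℝ
  tauStar : ℝ → ℝ
  smooth_T : ContDiff ℝ (⊤ : ℕ∞) T
  smooth_N : ContDiff ℝ (⊤ : ℕ∞) N
  smooth_B : ContDiff ℝ (⊤ : ℕ∞) B
  smooth_Tstar : ContDiff ℝ (⊤ : ℕ∞) Tstar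
  smooth_Nstar : ContDiff ℝ (⊤ : ℕ∞) Nstar
  smooth_Bstar : ContDiff ℝ (⊤ : ℕ∞) Bstar
  smooth_kappa : ContDiff ℝ (⊤ : ℕ∞) kappa
  smooth_tau : ContDiff ℝ (⊤ : ℕ∞) tau
  smooth_kappaStar : ContDiff ℝ (⊤ : ℕ∞) kappaStar
  smooth_tauStar : ContDiff ℝ (⊤ : ℕ∞) tauStar
  unit_T : ∀ s, T s ⬝ᵥ T s = 1
  unit_N : ∀ s, N s ⬝ᵥ N s = 1
  unit_B : ∀ s, B s ⬝ᵥ B s = 1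
  orth_TN : ∀ s, T s ⬝ᵥ N s = 0
  orth_TB : ∀ s, T s ⬝ᵥ B s = 0
  orth_NB : ∀ s, N s ⬝ᵥ B s = 0
  B_eq : ∀ s, B s = cross3 (T s) (N s)
  frenet_T : ∀ s, deriv T s = kappa s • N s
  frenet_N : ∀ s, deriv N s = (-(kappa s)) • T s + tau s • B s
  frenet_B : ∀ s, deriv B s = (-(tau s)) • N s
  frenet_Tstar : ∀ s, deriv Tstar s = kappa s • Nstar s + kappaStar s • N s
  frenet_Nstar : ∀ s, deriv Nstar s =
    (-(kappa s)) • Tstar s + (-(kappaStar s)) • T s + tau s • Bstar s + tauStar s • B s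
  frenet_Bstar : ∀ s, deriv Bstar s = (-(tau s)) • Nstar s + (-(tauStar s)) • N s

lemma key_rel (F : DualFrenetApparatus) (βT βN βB : ℝ → Fin 3 → ℝ)
    (hTstar : ∀ s, F.Tstar s = cross3 (βT s) (F.T s))
    (hNstar : ∀ s, F.Nstar s = cross3 (βN s) (F.N s)) :
    ∀ s, F.kappa s * (F.tau s * (F.Tstar s ⬝ᵥ F.B s + F.Bstar s ⬝ᵥ F.T s)) = 0 := by
  intro s
  -- derivatives
  have hdT : ∀ u, HasDerivAt F.T (F.kappa u • F.N u) u := fun u => by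
    have h := ((F.smooth_T.differentiable (by simp)) u).hasDerivAt
    rwa [F.frenet_T u] at h
  have hdN : ∀ u, HasDerivAt F.N ((-(F.kappa u)) • F.T u + F.tau u • F.B u) u := fun u => by
    have h := ((F.smooth_N.differentiable (by simp)) u).hasDerivAt
    rwa [F.frenet_N u] at h
  have hdTs : ∀ u, HasDerivAt F.Tstar (F.kappa u • F.Nstar u + F.kappaStar u • F.N u) u :=
    fun u => by
    have h := ((F.smooth_Tstar.differentiable (by simp)) u).hasDerivAt
    rwa [F.frenet_Tstar u] at h
  have hdNs : ∀ u, HasDerivAt F.Nstar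
      ((-(F.kappa u)) • F.Tstar u + (-(F.kappaStar u)) • F.T u + F.tau u • F.Bstar u +
        F.tauStar u • F.B u) u := fun u => by
    have h := ((F.smooth_Nstar.differentiable (by simp)) u).hasDerivAt
    rwa [F.frenet_Nstar u] at h
  -- basic dot facts
  have hTsT : ∀ u, F.Tstar u ⬝ᵥ F.T u = 0 := fun u => by
    rw [hTstar u]; exact dot_cross3_self' _ _
  have hNsN : ∀ u, F.Nstar u ⬝ᵥ F.N u = 0 := fun u => by
    rw [hNstar u]; exact dot_cross3_self' _ _
  have hNT : ∀ u, F.N u ⬝ᵥ F.T u = 0 := fun u => by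
    rw [dotProduct_comm]; exact F.orth_TN u
  have hBT : ∀ u, F.B u ⬝ᵥ F.T u = 0 := fun u => by
    rw [dotProduct_comm]; exact F.orth_TB u
  -- g : the key scalar function
  set g : ℝ → ℝ := fun u => F.Tstar u ⬝ᵥ F.N u + F.Nstar u ⬝ᵥ F.T u with hg_def
  have hg0 : ∀ u, F.kappa u * g u = 0 := by
    intro u
    have hzero : (fun r => F.Tstar r ⬝ᵥ F.T r) = fun _ => (0 : ℝ) := funext fun r => hTsT r
    have hd := hasDerivAt_dot (hdTs u) (hdT u)
    have hd0 : HasDerivAt (fun r => F.Tstar r ⬝ᵥ F.T r) 0 u := by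
      rw [hzero]; exact hasDerivAt_const u 0
    have huniq := hd.unique hd0
    simp only [add_dotProduct, smul_dotProduct, dotProduct_smul,
      smul_eq_mul] at huniq
    show F.kappa u * (F.Tstar u ⬝ᵥ F.N u + F.Nstar u ⬝ᵥ F.T u) = 0
    linear_combination huniq - F.kappaStar u * hNT u
  have hgd : ∀ u, HasDerivAt g
      (F.tau u * (F.Tstar u ⬝ᵥ F.B u + F.Bstar u ⬝ᵥ F.T u)) u := by
    intro u
    have hd := (hasDerivAt_dot (hdTs u) (hdN u)).add (hasDerivAt_dot (hdNs u) (hdT u))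
    refine hd.congr_deriv ?_
    simp only [add_dotProduct, smul_dotProduct, dotProduct_add,
      dotProduct_smul, smul_eq_mul]
    rw [hNsN u, hTsT u, F.unit_N u, F.unit_T u, hBT u]
    ring
  by_cases hk : F.kappa s = 0
  · rw [hk]; ring
  · have hne : ∀ᶠ u in nhds s, F.kappa u ≠ 0 :=
      (F.smooth_kappa.continuous.continuousAt).eventually_ne hk
    have hev : g =ᶠ[nhds s] fun _ => (0 : ℝ) :=
      hne.mono fun u hu => by
        have h := hg0 u
        exact (mul_eq_zero.1 h).resolve_left hu
    have hder : deriv g s = 0 := by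
      rw [Filter.EventuallyEq.deriv_eq hev]; simp
    rw [(hgd s).deriv] at hder
    rw [hder, mul_zero]

/-- Partial derivative of a parametrized surface with respect to the first parameter. -/
noncomputable def phiS (φ : ℝ → ℝ → Fin 3 → ℝ) (s v : ℝ) : Fin 3 → ℝ :=
  deriv (fun t => φ t v) s

/-- Partial derivative with respect to the second parameter. -/
noncomputable def phiV (φ : ℝ → ℝ → Fin 3 → ℝ) (s v : ℝ) : Fin 3 → ℝ :=
  deriv (φ s) v

noncomputable def phiSS (φ : ℝ → ℝ → Fin 3 → ℝ) (s v : ℝ) : Fin 3 → ℝ :=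
  deriv (fun t => phiS φ t v) s

noncomputable def phiSV (φ : ℝ → ℝ → Fin 3 → ℝ) (s v : ℝ) : Fin 3 → ℝ :=
  deriv (fun w => phiS φ s w) v

noncomputable def phiVV (φ : ℝ → ℝ → Fin 3 → ℝ) (s v : ℝ) : Fin 3 → ℝ :=
  deriv (fun w => phiV φ s w) v

/-- `(s, v)` is a regular point of `φ` if `φ_s × φ_v ≠ 0` there. -/
def IsRegularPoint (φ : ℝ → ℝ → Fin 3 → ℝ) (s v : ℝ) : Prop :=
  cross3 (phiS φ s v) (phiV φ s v) ≠ 0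

/-- The unit normal `n = (φ_v × φ_s) / ‖φ_v × φ_s‖`. -/
noncomputable def unitNormal (φ : ℝ → ℝ → Fin 3 → ℝ) (s v : ℝ) : Fin 3 → ℝ :=
  (enorm3 (cross3 (phiV φ s v) (phiS φ s v)))⁻¹ • cross3 (phiV φ s v) (phiS φ s v)

/-- Gaussian curvature `K = (eg − f²)/(EG − F²)`. -/
noncomputable def GaussK (φ : ℝ → ℝ → Fin 3 → ℝ) (s v : ℝ) : ℝ :=
  (phiSS φ s v ⬝ᵥ unitNormal φ s v * (phiVV φ s v ⬝ᵥ unitNormal φ s v) -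
      (phiSV φ s v ⬝ᵥ unitNormal φ s v) ^ 2) /
    (phiS φ s v ⬝ᵥ phiS φ s v * (phiV φ s v ⬝ᵥ phiV φ s v) -
      (phiS φ s v ⬝ᵥ phiV φ s v) ^ 2)

/-- Mean curvature (trace of the shape operator) `H = (eG − 2fF + gE)/(EG − F²)`. -/
noncomputable def MeanH (φ : ℝ → ℝ → Fin 3 → ℝ) (s v : ℝ) : ℝ :=
  (phiSS φ s v ⬝ᵥ unitNormal φ s v * (phiV φ s v ⬝ᵥ phiV φ s v) -
      2 * (phiSV φ s v ⬝ᵥ unitNormal φ s v) * (phiS φ s v ⬝ᵥ phiV φ s v) +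
      phiVV φ s v ⬝ᵥ unitNormal φ s v * (phiS φ s v ⬝ᵥ phiS φ s v)) /
    (phiS φ s v ⬝ᵥ phiS φ s v * (phiV φ s v ⬝ᵥ phiV φ s v) -
      (phiS φ s v ⬝ᵥ phiV φ s v) ^ 2)

/-- The ruled surface `φ_X(s,v) = X(s) × X*(s) + v·X(s)`. -/
noncomputable def ruled (X Xstar : ℝ → Fin 3 → ℝ) : ℝ → ℝ → Fin 3 → ℝ :=
  fun s v => cross3 (X s) (Xstar s) + v • X s

/-- At every regular point the Gaussian curvature of the ruled surface associated to the
dual principal normal indicatrix is `K_N = −(κκ* + ττ*)² / ‖Y₂_N‖⁴` (equation (3)). -/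
theorem gauss_curvature_normal_indicatrix (F : DualFrenetApparatus)
    (βT βN βB : ℝ → Fin 3 → ℝ)
    (hβT : ContDiff ℝ (⊤ : ℕ∞) βT) (hβN : ContDiff ℝ (⊤ : ℕ∞) βN) (hβB : ContDiff ℝ (⊤ : ℕ∞) βB)
    (hTstar : ∀ s, F.Tstar s = cross3 (βT s) (F.T s))
    (hNstar : ∀ s, F.Nstar s = cross3 (βN s) (F.N s))
    (hBstar : ∀ s, F.Bstar s = cross3 (βB s) (F.B s)) :
    ∀ s v : ℝ, IsRegularPoint (ruled F.N F.Nstar) s v →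
      GaussK (ruled F.N F.Nstar) s v =
        -(F.kappa s * F.kappaStar s + F.tau s * F.tauStar s) ^ 2 /
          (F.kappa s ^ 2 * (βT s ⬝ᵥ F.N s) ^ 2 +
        (2 * F.kappa s * F.tauStar s - 2 * F.kappa s ^ 2 * v) * (βT s ⬝ᵥ F.N s) +
        F.kappaStar s ^ 2 -
        (2 * F.tau s * F.kappaStar s + 2 * F.tau s ^ 2 * v) * (βB s ⬝ᵥ F.N s) +
        2 * F.kappaStar s * F.tau s * v + F.tau s ^ 2 * (βB s ⬝ᵥ F.N s) ^ 2 +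
        F.tauStar s ^ 2 - 2 * F.kappa s * F.tauStar s * v +
        v ^ 2 * (F.kappa s ^ 2 + F.tau s ^ 2)) ^ 2 := by
  intro s v hreg
  -- derivatives at s
  have hdN : HasDerivAt F.N ((-(F.kappa s)) • F.T s + F.tau s • F.B s) s := by
    have h := ((F.smooth_N.differentiable (by simp)) s).hasDerivAt
    rwa [F.frenet_N s] at h
  have hdNs : HasDerivAt F.Nstar ((-(F.kappa s)) • F.Tstar s + (-(F.kappaStar s)) • F.T s
      + F.tau s • F.Bstar s + F.tauStar s • F.B s) s := by
    have h := ((F.smooth_Nstar.differentiable (by simp)) s).hasDerivAt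
    rwa [F.frenet_Nstar s] at h
  set dN : Fin 3 → ℝ := (-(F.kappa s)) • F.T s + F.tau s • F.B s with hdN_def
  set dNs : Fin 3 → ℝ := (-(F.kappa s)) • F.Tstar s + (-(F.kappaStar s)) • F.T s
      + F.tau s • F.Bstar s + F.tauStar s • F.B s with hdNs_def
  -- formulas for the partial derivatives of the surface
  have hphiS : ∀ w : ℝ, phiS (ruled F.N F.Nstar) s w
      = cross3 dN (F.Nstar s) + cross3 (F.N s) dNs + w • dN := by
    intro w
    have h : HasDerivAt (fun t => cross3 (F.N t) (F.Nstar t) + w • F.N t)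
        (cross3 dN (F.Nstar s) + cross3 (F.N s) dNs + w • dN) s :=
      (hasDerivAt_cross3 hdN hdNs).add (hdN.const_smul w)
    have h2 : phiS (ruled F.N F.Nstar) s w
        = deriv (fun t => cross3 (F.N t) (F.Nstar t) + w • F.N t) s := by
      simp only [phiS, ruled]
    rw [h2, h.deriv]
  have hphiV : ∀ w : ℝ, phiV (ruled F.N F.Nstar) s w = F.N s := by
    intro w
    have h : HasDerivAt (fun y : ℝ => cross3 (F.N s) (F.Nstar s) + y • F.N s)
        ((1:ℝ) • F.N s) w :=
      HasDerivAt.const_add _ ((hasDerivAt_id w).smul_const (F.N s))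
    have hfun : ruled F.N F.Nstar s = fun y : ℝ => cross3 (F.N s) (F.Nstar s) + y • F.N s := by
      funext y; simp only [ruled]
    simp only [phiV]
    rw [hfun, h.deriv, one_smul]
  have hphiVV : phiVV (ruled F.N F.Nstar) s v = 0 := by
    have h : (fun w => phiV (ruled F.N F.Nstar) s w) = fun _ => F.N s := funext hphiV
    simp only [phiVV]
    rw [h]
    exact deriv_const v _
  have hphiSV : phiSV (ruled F.N F.Nstar) s v = dN := by
    have h : (fun w => phiS (ruled F.N F.Nstar) s w)
        = fun w : ℝ => (cross3 dN (F.Nstar s) + cross3 (F.N s) dNs) + w • dN := by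
      funext w; rw [hphiS w]
    have hd : HasDerivAt
        (fun w : ℝ => (cross3 dN (F.Nstar s) + cross3 (F.N s) dNs) + w • dN)
        ((1:ℝ) • dN) v :=
      HasDerivAt.const_add _ ((hasDerivAt_id v).smul_const dN)
    simp only [phiSV]
    rw [h, hd.deriv, one_smul]
  -- frame dot and cross facts
  have ht := F.unit_T s
  have hn := F.unit_N s
  have hbb := F.unit_B s
  have htn := F.orth_TN s
  have hnt : F.N s ⬝ᵥ F.T s = 0 := by rw [dotProduct_comm]; exact htn
  have htb := F.orth_TB s
  have hbt : F.B s ⬝ᵥ F.T s = 0 := by rw [dotProduct_comm]; exact htb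
  have hB := F.B_eq s
  have E1 : cross3 (F.T s) (F.N s) = F.B s := hB.symm
  have E2 : cross3 (F.T s) (F.B s) = -F.N s := by
    rw [hB, cross3_cross3, htn, ht]; simp
  have E3 : cross3 (F.N s) (F.B s) = F.T s := by
    rw [hB, cross3_cross3, hn, hnt]; simp
  have E4 : cross3 (F.B s) (F.T s) = F.N s := by
    calc cross3 (F.B s) (F.T s) = -(cross3 (F.T s) (F.B s)) := by
          rw [cross3_def, cross3_def, cross_anticomm]
      _ = F.N s := by rw [E2, neg_neg]
  have E5 : cross3 (F.N s) (F.T s) = -F.B s := by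
    calc cross3 (F.N s) (F.T s) = -(cross3 (F.T s) (F.N s)) := by
          rw [cross3_def, cross3_def, cross_anticomm]
      _ = -F.B s := by rw [E1]
  have E6 : cross3 (F.B s) (F.N s) = -F.T s := by
    calc cross3 (F.B s) (F.N s) = -(cross3 (F.N s) (F.B s)) := by
          rw [cross3_def, cross3_def, cross_anticomm]
      _ = -F.T s := by rw [E3]
  -- star dot facts
  have S1 : F.Tstar s ⬝ᵥ F.T s = 0 := by rw [hTstar s]; exact dot_cross3_self' _ _
  have S3 : F.Tstar s ⬝ᵥ F.B s = -(βT s ⬝ᵥ F.N s) := by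
    rw [hTstar s, cross3_dot', E2, dotProduct_neg]
  have S4 : F.Nstar s ⬝ᵥ F.T s = -(βN s ⬝ᵥ F.B s) := by
    rw [hNstar s, cross3_dot', E5, dotProduct_neg]
  have S5 : F.Nstar s ⬝ᵥ F.N s = 0 := by rw [hNstar s]; exact dot_cross3_self' _ _
  have S7 : F.Bstar s ⬝ᵥ F.T s = βB s ⬝ᵥ F.N s := by
    rw [hBstar s, cross3_dot', E4]
  have S9 : F.Bstar s ⬝ᵥ F.B s = 0 := by rw [hBstar s]; exact dot_cross3_self' _ _
  -- the vector u = φ_s at (s,v)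
  set u : Fin 3 → ℝ := cross3 dN (F.Nstar s) + cross3 (F.N s) dNs + v • dN with hu_def
  have hSu : phiS (ruled F.N F.Nstar) s v = u := hphiS v
  -- pieces of u ⬝ᵥ T and u ⬝ᵥ B
  have hcr : cross3 dN (F.Nstar s)
      = (-(F.kappa s)) • cross3 (F.T s) (F.Nstar s) + F.tau s • cross3 (F.B s) (F.Nstar s) := by
    rw [hdN_def, cross3_add_left, cross3_smul_left, cross3_smul_left]
  have p1t : cross3 dN (F.Nstar s) ⬝ᵥ F.T s = 0 := by
    rw [hcr, add_dotProduct, smul_dotProduct, smul_dotProduct]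
    have q1 : cross3 (F.T s) (F.Nstar s) ⬝ᵥ F.T s = 0 := dot_cross3_self _ _
    have q2 : cross3 (F.B s) (F.Nstar s) ⬝ᵥ F.T s = 0 := by
      rw [cross3_dot, E2, dotProduct_neg, S5, neg_zero]
    rw [q1, q2]; simp
  have p1b : cross3 dN (F.Nstar s) ⬝ᵥ F.B s = 0 := by
    rw [hcr, add_dotProduct, smul_dotProduct, smul_dotProduct]
    have q1 : cross3 (F.T s) (F.Nstar s) ⬝ᵥ F.B s = 0 := by
      rw [cross3_dot, E4, S5]
    have q2 : cross3 (F.B s) (F.Nstar s) ⬝ᵥ F.B s = 0 := dot_cross3_self _ _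
    rw [q1, q2]; simp
  have hdNsb : dNs ⬝ᵥ F.B s = F.kappa s * (βT s ⬝ᵥ F.N s) + F.tauStar s := by
    rw [hdNs_def]
    simp only [add_dotProduct, smul_dotProduct, smul_eq_mul]
    rw [S3, htb, S9, hbb]; ring
  have hdNst : dNs ⬝ᵥ F.T s = F.tau s * (βB s ⬝ᵥ F.N s) - F.kappaStar s := by
    rw [hdNs_def]
    simp only [add_dotProduct, smul_dotProduct, smul_eq_mul]
    rw [S1, ht, S7, hbt]; ring
  have p2t : cross3 (F.N s) dNs ⬝ᵥ F.T s = F.kappa s * (βT s ⬝ᵥ F.N s) + F.tauStar s := by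
    rw [cross3_dot, E1, hdNsb]
  have p2b : cross3 (F.N s) dNs ⬝ᵥ F.B s
      = F.kappaStar s - F.tau s * (βB s ⬝ᵥ F.N s) := by
    rw [cross3_dot, E6, dotProduct_neg, hdNst]; ring
  have p3t : dN ⬝ᵥ F.T s = -(F.kappa s) := by
    rw [hdN_def]
    simp only [add_dotProduct, smul_dotProduct, smul_eq_mul]
    rw [ht, hbt]; ring
  have p3b : dN ⬝ᵥ F.B s = F.tau s := by
    rw [hdN_def]
    simp only [add_dotProduct, smul_dotProduct, smul_eq_mul]
    rw [htb, hbb]; ring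
  have hAt : u ⬝ᵥ F.T s
      = F.kappa s * (βT s ⬝ᵥ F.N s) + F.tauStar s - F.kappa s * v := by
    rw [hu_def, add_dotProduct, add_dotProduct, smul_dotProduct,
      p1t, p2t, p3t, smul_eq_mul]
    ring
  have hAb : u ⬝ᵥ F.B s
      = F.kappaStar s - F.tau s * (βB s ⬝ᵥ F.N s) + F.tau s * v := by
    rw [hu_def, add_dotProduct, add_dotProduct, smul_dotProduct,
      p1b, p2b, p3b, smul_eq_mul]
    ring
  -- the normal direction vector w' = φ_v × φ_s
  set w' : Fin 3 → ℝ := cross3 (F.N s) u with hw_def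
  have hregw : w' ≠ 0 := by
    have hreg' : cross3 u (F.N s) ≠ 0 := by
      have := hreg
      unfold IsRegularPoint at this
      rwa [hSu, hphiV v] at this
    have hanti : w' = -(cross3 u (F.N s)) := by
      rw [hw_def, cross3_def, cross3_def, cross_anticomm]
    rw [hanti]
    exact neg_ne_zero.2 hreg'
  have hwpos : 0 < w' ⬝ᵥ w' := by
    rcases lt_or_eq_of_le (dot_self_nonneg3 w') with h | h
    · exact h
    · exact absurd ((dotProduct_self_eq_zero).1 h.symm) hregw
  have hgram : u ⬝ᵥ u = (u ⬝ᵥ F.T s) ^ 2 + (u ⬝ᵥ F.N s) ^ 2 + (u ⬝ᵥ F.B s) ^ 2 := by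
    have hg := gram (F.T s) (F.N s) u ht hn htn
    rwa [E1] at hg
  have hW : w' ⬝ᵥ w' = (u ⬝ᵥ F.T s) ^ 2 + (u ⬝ᵥ F.B s) ^ 2 := by
    have hcdc := cross_dot_cross (F.N s) u (F.N s) u
    have hw2 : w' ⬝ᵥ w' = F.N s ⬝ᵥ F.N s * (u ⬝ᵥ u) - F.N s ⬝ᵥ u * (u ⬝ᵥ F.N s) := by
      rw [hw_def, cross3_def]; exact hcdc
    rw [hw2, hn, dotProduct_comm (F.N s) u]
    linear_combination hgram
  have henorm : enorm3 w' ^ 2 = w' ⬝ᵥ w' := by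
    simp only [enorm3]
    exact Real.sq_sqrt (dot_self_nonneg3 w')
  have hcpos : 0 < enorm3 w' := by
    simp only [enorm3]
    exact Real.sqrt_pos.2 hwpos
  -- value of dN ⬝ᵥ w'
  have hX1 : dN ⬝ᵥ w' = -(F.kappa s * (u ⬝ᵥ F.B s)) - F.tau s * (u ⬝ᵥ F.T s) := by
    have h1 : dN ⬝ᵥ w' = u ⬝ᵥ cross3 dN (F.N s) := by
      rw [hw_def, dotProduct_comm, cross3_dot]
    have h2 : cross3 dN (F.N s) = (-(F.kappa s)) • F.B s + F.tau s • (-F.T s) := by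
      rw [hdN_def, cross3_add_left, cross3_smul_left, cross3_smul_left, E1, E6]
    rw [h1, h2, dotProduct_add, dotProduct_smul, dotProduct_smul,
      dotProduct_neg, smul_eq_mul, smul_eq_mul]
    ring
  have kr := key_rel F βT βN βB hTstar hNstar s
  rw [S3, S7] at kr
  have hXval : dN ⬝ᵥ w' = -(F.kappa s * F.kappaStar s + F.tau s * F.tauStar s) := by
    rw [hX1, hAt, hAb]
    linear_combination kr
  -- assemble
  have hden : u ⬝ᵥ u - (u ⬝ᵥ F.N s) ^ 2 = (u ⬝ᵥ F.T s) ^ 2 + (u ⬝ᵥ F.B s) ^ 2 := by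
    linear_combination hgram
  have hQbig : (u ⬝ᵥ F.T s) ^ 2 + (u ⬝ᵥ F.B s) ^ 2
      = F.kappa s ^ 2 * (βT s ⬝ᵥ F.N s) ^ 2 +
        (2 * F.kappa s * F.tauStar s - 2 * F.kappa s ^ 2 * v) * (βT s ⬝ᵥ F.N s) +
        F.kappaStar s ^ 2 -
        (2 * F.tau s * F.kappaStar s + 2 * F.tau s ^ 2 * v) * (βB s ⬝ᵥ F.N s) +
        2 * F.kappaStar s * F.tau s * v + F.tau s ^ 2 * (βB s ⬝ᵥ F.N s) ^ 2 +
        F.tauStar s ^ 2 - 2 * F.kappa s * F.tauStar s * v +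
        v ^ 2 * (F.kappa s ^ 2 + F.tau s ^ 2) := by
    rw [hAt, hAb]; ring
  simp only [GaussK, unitNormal]
  rw [hphiVV, hSu, hphiV v, hphiSV]
  rw [← hw_def]
  rw [zero_dotProduct, mul_zero]
  rw [dotProduct_smul, smul_eq_mul, hXval]
  rw [hn, mul_one, ← hQbig, hden]
  have hQpos : 0 < (u ⬝ᵥ F.T s) ^ 2 + (u ⬝ᵥ F.B s) ^ 2 := hW ▸ hwpos
  have hQne : (u ⬝ᵥ F.T s) ^ 2 + (u ⬝ᵥ F.B s) ^ 2 ≠ 0 := ne_of_gt hQpos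
  have hsq : ((enorm3 w')⁻¹ * -(F.kappa s * F.kappaStar s + F.tau s * F.tauStar s)) ^ 2
      = (F.kappa s * F.kappaStar s + F.tau s * F.tauStar s) ^ 2
        / ((u ⬝ᵥ F.T s) ^ 2 + (u ⬝ᵥ F.B s) ^ 2) := by
    rw [mul_pow, inv_pow, henorm, hW, neg_sq, inv_mul_eq_div]
  rw [hsq]
  rw [zero_sub, ← neg_div, div_div, ← pow_two]


end
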